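/- arXiv:1811.12357 — 3 statements merged into one kernel-verified Lean document; each statement's English description precedes it below -/
import Mathlib

section
/- Let Θ_1,…,Θ_N be pairwise disjoint compact strictly convex subsets of ℝ³ satisfying the no-shadow condition: for all pairwise distinct indices i, j, k, the convex hull of Θ_i ∪ Θ_j is disjoint from Θ_k. If L is a straight line in ℝ³ whose intersection with the interior of Θ_i is empty for every i (i.e., L is everywhere tangent to the obstacles it meets), then L meets the union Θ_1 ∪ … ∪ Θ_N in at most two points. -/
/-!
A line that avoids the interior of a strictly convex set meets it in at most one point: two
such points would put their whole open segment inside both the line and the interior. Hence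
three distinct points of the line lying on the obstacles lie on three distinct obstacles, and
since they are collinear one of them lies between the other two, i.e. in the convex hull of
the other two obstacles, which the no-shadow condition forbids.
-/

open Set

theorem convex_setOf_exists_eq_add_smul {𝕜 E : Type*} [CommRing 𝕜] [PartialOrder 𝕜]
    [AddCommGroup E] [Module 𝕜 E] (a v : E) : Convex 𝕜 {p | ∃ t : 𝕜, p = a + t • v} := by
  rintro _ ⟨s, rfl⟩ _ ⟨t, rfl⟩ α β - - hαβ
  exact ⟨α * s + β * t, by linear_combination (norm := module) hαβ • a⟩

theorem collinear_setOf_exists_eq_add_smul {𝕜 E : Type*} [DivisionRing 𝕜] [AddCommGroup E]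
    [Module 𝕜 E] (a v : E) : Collinear 𝕜 {p | ∃ t : 𝕜, p = a + t • v} :=
  (collinear_iff_exists_forall_eq_smul_vadd _).2
    ⟨a, v, fun _ ⟨t, ht⟩ => ⟨t, ht.trans (add_comm _ _)⟩⟩

theorem StrictConvex.subsingleton_inter_of_inter_interior_eq_empty {𝕜 E : Type*} [Field 𝕜]
    [LinearOrder 𝕜] [IsStrictOrderedRing 𝕜] [AddCommGroup E] [Module 𝕜 E] [TopologicalSpace E]
    {Θ L : Set E} (hΘ : StrictConvex 𝕜 Θ) (hL : Convex 𝕜 L) (htan : L ∩ interior Θ = ∅) :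
    (L ∩ Θ).Subsingleton := by
  intro x ⟨hxL, hxΘ⟩ y ⟨hyL, hyΘ⟩
  by_contra hxy
  have hmid := midpoint_mem_openSegment (𝕜 := 𝕜) x y
  exact (htan.subset ⟨hL.openSegment_subset hxL hyL hmid,
    hΘ.openSegment_subset hxΘ hyΘ hxy hmid⟩).elim

theorem not_wbtw_of_no_shadow {ι E : Type*} [AddCommGroup E] [Module ℝ E]
    {Θ : ι → Set E} {L : Set E}
    (hshadow : ∀ i j k : ι, i ≠ j → j ≠ k → i ≠ k → convexHull ℝ (Θ i ∪ Θ j) ∩ Θ k = ∅)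
    (hsub : ∀ i, (L ∩ Θ i).Subsingleton) {x y z : E}
    (hx : x ∈ L ∩ ⋃ i, Θ i) (hy : y ∈ L ∩ ⋃ i, Θ i) (hz : z ∈ L ∩ ⋃ i, Θ i)
    (hxy : x ≠ y) (hxz : x ≠ z) (hyz : y ≠ z) : ¬ Wbtw ℝ x y z := by
  intro hbtw
  obtain ⟨hxL, i, ⟨i, rfl⟩, hxi⟩ := hx
  obtain ⟨hyL, j, ⟨j, rfl⟩, hyj⟩ := hy
  obtain ⟨hzL, k, ⟨k, rfl⟩, hzk⟩ := hz
  have index_ne {p q : E} {m n : ι} (hp : p ∈ L) (hq : q ∈ L) (hpm : p ∈ Θ m) (hqn : q ∈ Θ n)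
      (hpq : p ≠ q) : m ≠ n := by
    rintro rfl
    exact hpq (hsub m ⟨hp, hpm⟩ ⟨hq, hqn⟩)
  have hy_hull : y ∈ convexHull ℝ (Θ i ∪ Θ k) :=
    segment_subset_convexHull (mem_union_left _ hxi) (mem_union_right _ hzk) hbtw.mem_segment
  have := hshadow i k j (index_ne hxL hzL hxi hzk hxz) (index_ne hzL hyL hzk hyj hyz.symm)
    (index_ne hxL hyL hxi hyj hxy)
  exact this.subset ⟨hy_hull, hyj⟩

theorem tangent_line_meets_obstacles_in_at_most_two_points_general
    (N : ℕ) (Θ : Fin N → Set (EuclideanSpace ℝ (Fin 3)))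
    (hconv : ∀ i, StrictConvex ℝ (Θ i))
    (hshadow : ∀ i j k : Fin N, i ≠ j → j ≠ k → i ≠ k →
      convexHull ℝ (Θ i ∪ Θ j) ∩ Θ k = ∅)
    (a v : EuclideanSpace ℝ (Fin 3))
    (L : Set (EuclideanSpace ℝ (Fin 3)))
    (hL : L = {p | ∃ t : ℝ, p = a + t • v})
    (htan : ∀ i, L ∩ interior (Θ i) = ∅) :
    ∀ x ∈ L ∩ ⋃ i, Θ i, ∀ y ∈ L ∩ ⋃ i, Θ i, ∀ z ∈ L ∩ ⋃ i, Θ i,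
      x = y ∨ x = z ∨ y = z := by
  intro x hx y hy z hz
  by_contra! hne
  obtain ⟨hxy, hxz, hyz⟩ := hne
  have hsub i : (L ∩ Θ i).Subsingleton := (hconv i).subsingleton_inter_of_inter_interior_eq_empty
    (hL ▸ convex_setOf_exists_eq_add_smul a v) (htan i)
  have hcol : Collinear ℝ {x, y, z} := (hL ▸ collinear_setOf_exists_eq_add_smul a v).subset
    (insert_subset hx.1 (insert_subset hy.1 (singleton_subset_iff.2 hz.1)))
  rcases hcol.wbtw_or_wbtw_or_wbtw with h | h | h
  · exact not_wbtw_of_no_shadow hshadow hsub hx hy hz hxy hxz hyz h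
  · exact not_wbtw_of_no_shadow hshadow hsub hy hz hx hyz hxy.symm hxz.symm h
  · exact not_wbtw_of_no_shadow hshadow hsub hz hx hy hxz.symm hyz.symm hxy h

/-- Let `Θ_1,…,Θ_N` be pairwise disjoint compact strictly convex subsets
of `ℝ³` satisfying the no-shadow condition: for all pairwise distinct indices `i, j, k`,
the convex hull of `Θ_i ∪ Θ_j` is disjoint from `Θ_k`. If `L` is a straight line in `ℝ³`
whose intersection with the interior of `Θ_i` is empty for every `i`, then `L` meets the
union `Θ_1 ∪ … ∪ Θ_N` in at most two points. -/
theorem tangent_line_meets_obstacles_in_at_most_two_points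
    (N : ℕ) (Θ : Fin N → Set (EuclideanSpace ℝ (Fin 3)))
    (hdisj : Pairwise fun i j => Disjoint (Θ i) (Θ j))
    (hcomp : ∀ i, IsCompact (Θ i))
    (hconv : ∀ i, StrictConvex ℝ (Θ i))
    (hshadow : ∀ i j k : Fin N, i ≠ j → j ≠ k → i ≠ k →
      convexHull ℝ (Θ i ∪ Θ j) ∩ Θ k = ∅)
    (a v : EuclideanSpace ℝ (Fin 3)) (hv : v ≠ 0)
    (L : Set (EuclideanSpace ℝ (Fin 3)))
    (hL : L = {p | ∃ t : ℝ, p = a + t • v})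
    (htan : ∀ i, L ∩ interior (Θ i) = ∅) :
    ∀ x ∈ L ∩ ⋃ i, Θ i, ∀ y ∈ L ∩ ⋃ i, Θ i, ∀ z ∈ L ∩ ⋃ i, Θ i,
      x = y ∨ x = z ∨ y = z :=
  tangent_line_meets_obstacles_in_at_most_two_points_general N Θ hconv hshadow a v L hL htan
end

section
/- Let ι be a countable index set and let λ, d : ι → ℝ satisfy 0 ≤ λ_i for all i, and d_i ≥ d_min for all i for some d_min > 0. Let α > 0 be such that λ_i·e^{α d_i} ≤ 1 for every i and such that the family (d_i·λ_i·e^{α d_i})_{i∈ι} is summable, with sum S. Let D > 0 and t > 0, and let ρ : ι → ℝ satisfy ρ_i ≥ max(1, D·t/d_i) for every i. Then the family (d_i·λ_i^{ρ_i})_{i∈ι} is summable and Σ_{i∈ι} d_i·λ_i^{ρ_i} ≤ e^{−α D t}·S. -/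
/-- Let `ι` be a countable index set and `λ, d : ι → ℝ` with `0 ≤ λ_i`,
`d_i ≥ d_min > 0`. Let `α > 0` be such that `λ_i·e^{α d_i} ≤ 1` for every `i` and such that
the family `(d_i·λ_i·e^{α d_i})` is summable with sum `S`. Let `D > 0`, `t > 0`, and let
`ρ : ι → ℝ` satisfy `ρ_i ≥ max(1, D·t/d_i)` for every `i`. Then `(d_i·λ_i^{ρ_i})` is
summable and `Σ_i d_i·λ_i^{ρ_i} ≤ e^{−α D t}·S`. -/
theorem sum_amplitudes_exponential_decay
    {ι : Type*} [Countable ι] (lam d : ι → ℝ) (dmin : ℝ) (hdmin : 0 < dmin)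
    (hlam : ∀ i, 0 ≤ lam i) (hd : ∀ i, dmin ≤ d i)
    (α : ℝ) (hα : 0 < α)
    (hle1 : ∀ i, lam i * Real.exp (α * d i) ≤ 1)
    (S : ℝ) (hS : HasSum (fun i => d i * lam i * Real.exp (α * d i)) S)
    (D t : ℝ) (hD : 0 < D) (ht : 0 < t)
    (ρ : ι → ℝ) (hρ : ∀ i, max 1 (D * t / d i) ≤ ρ i) :
    Summable (fun i => d i * lam i ^ (ρ i)) ∧
      ∑' i, d i * lam i ^ (ρ i) ≤ Real.exp (-(α * D * t)) * S := by
  have key : ∀ i, d i * lam i ^ (ρ i) ≤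
      Real.exp (-(α * D * t)) * (d i * lam i * Real.exp (α * d i)) := by
    intro i
    have hdi : (0:ℝ) < d i := lt_of_lt_of_le hdmin (hd i)
    have hρ1 : (1:ℝ) ≤ ρ i := le_trans (le_max_left _ _) (hρ i)
    have hρ2 : D * t / d i ≤ ρ i := le_trans (le_max_right _ _) (hρ i)
    have hdρ : D * t ≤ d i * ρ i := by
      have := (div_le_iff₀ hdi).mp hρ2
      linarith
    rcases eq_or_lt_of_le (hlam i) with h0 | hpos
    · have hz : lam i ^ (ρ i) = 0 := by
        rw [← h0]; exact Real.zero_rpow (by linarith)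
      rw [hz, mul_zero]
      apply mul_nonneg (Real.exp_pos _).le
      exact mul_nonneg (mul_nonneg hdi.le (hlam i)) (Real.exp_pos _).le
    · have hlame : lam i ≤ Real.exp (-(α * d i)) := by
        have h := (le_div_iff₀ (Real.exp_pos (α * d i))).mpr (hle1 i)
        rw [Real.exp_neg]
        simpa [one_div] using h
      have hsplit : lam i ^ (ρ i) = lam i * lam i ^ (ρ i - 1) := by
        have h := Real.rpow_add hpos 1 (ρ i - 1)
        rw [Real.rpow_one] at h
        rw [show (1 : ℝ) + (ρ i - 1) = ρ i by ring] at h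
        exact h
      have h1 : lam i ^ (ρ i - 1) ≤ Real.exp (-(α * d i)) ^ (ρ i - 1) :=
        Real.rpow_le_rpow (hlam i) hlame (by linarith)
      have h2 : Real.exp (-(α * d i)) ^ (ρ i - 1)
          = Real.exp (α * d i) * Real.exp (-(α * (d i * ρ i))) := by
        rw [← Real.exp_mul, ← Real.exp_add]
        ring_nf
      have h3 : Real.exp (-(α * (d i * ρ i))) ≤ Real.exp (-(α * D * t)) := by
        apply Real.exp_le_exp.mpr
        have : α * (D * t) ≤ α * (d i * ρ i) := mul_le_mul_of_nonneg_left hdρ hα.le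
        linarith
      have h4 : lam i ^ (ρ i)
          ≤ lam i * (Real.exp (α * d i) * Real.exp (-(α * D * t))) := by
        rw [hsplit]
        calc lam i * lam i ^ (ρ i - 1)
            ≤ lam i * (Real.exp (α * d i) * Real.exp (-(α * (d i * ρ i)))) := by
              rw [← h2]
              exact mul_le_mul_of_nonneg_left h1 (hlam i)
          _ ≤ lam i * (Real.exp (α * d i) * Real.exp (-(α * D * t))) := by
              exact mul_le_mul_of_nonneg_left
                (mul_le_mul_of_nonneg_left h3 (Real.exp_pos _).le) (hlam i)
      calc d i * lam i ^ (ρ i)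
          ≤ d i * (lam i * (Real.exp (α * d i) * Real.exp (-(α * D * t)))) :=
            mul_le_mul_of_nonneg_left h4 hdi.le
        _ = Real.exp (-(α * D * t)) * (d i * lam i * Real.exp (α * d i)) := by ring
  have hnn : ∀ i, 0 ≤ d i * lam i ^ (ρ i) := fun i =>
    mul_nonneg (le_trans hdmin.le (hd i)) (Real.rpow_nonneg (hlam i) _)
  have hg : Summable (fun i =>
      Real.exp (-(α * D * t)) * (d i * lam i * Real.exp (α * d i))) :=
    hS.summable.mul_left _
  have hsum : Summable (fun i => d i * lam i ^ (ρ i)) :=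
    Summable.of_nonneg_of_le hnn key hg
  refine ⟨hsum, ?_⟩
  calc ∑' i, d i * lam i ^ (ρ i)
      ≤ ∑' i, Real.exp (-(α * D * t)) * (d i * lam i * Real.exp (α * d i)) :=
        Summable.tsum_le_tsum key hsum hg
    _ = Real.exp (-(α * D * t)) * S := by rw [tsum_mul_left, hS.tsum_eq]
end

section
/- Let (x_k)_{k≥0} be a sequence of real numbers, and let B ≥ 0, M ≥ 0, C > 0, A ≥ 1 and δ > 0 be such that C·δ·A < 1, 0 ≤ x_k ≤ B for every k, and x_k ≤ (C + A^k)·M + C·δ·x_{k+1} for every k ≥ 0. Then x_0 ≤ (C/(1 − Cδ) + 1/(1 − CδA))·M. -/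
/-- Let `(x_k)` be a sequence of reals, `B ≥ 0`, `M ≥ 0`, `C > 0`,
`A ≥ 1`, `δ > 0` with `C·δ·A < 1`, `0 ≤ x_k ≤ B` for every `k`, and
`x_k ≤ (C + A^k)·M + C·δ·x_{k+1}` for every `k ≥ 0`. Then
`x_0 ≤ (C/(1 − Cδ) + 1/(1 − CδA))·M`. -/
theorem iteration_scheme_bound
    (x : ℕ → ℝ) (B M C A δ : ℝ)
    (hB : 0 ≤ B) (hM : 0 ≤ M) (hC : 0 < C) (hA : 1 ≤ A) (hδ : 0 < δ)
    (hCδA : C * δ * A < 1)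
    (hx0 : ∀ k, 0 ≤ x k) (hxB : ∀ k, x k ≤ B)
    (hrec : ∀ k, x k ≤ (C + A ^ k) * M + C * δ * x (k + 1)) :
    x 0 ≤ (C / (1 - C * δ) + 1 / (1 - C * δ * A)) * M := by
  set q := C * δ with hq
  set r := C * δ * A with hr
  have hq0 : 0 ≤ q := le_of_lt (mul_pos hC hδ)
  have hqr : q ≤ r := by
    calc q = q * 1 := by ring
    _ ≤ q * A := by nlinarith
    _ = r := by rw [hr, hq]
  have hr0 : 0 ≤ r := hq0.trans hqr
  have hr1 : r < 1 := hCδA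
  have hq1 : q < 1 := lt_of_le_of_lt hqr hr1
  -- unrolled recursion
  have key : ∀ k, x 0 ≤ M * (C * ∑ j ∈ Finset.range k, q ^ j
      + ∑ j ∈ Finset.range k, r ^ j) + q ^ k * x k := by
    intro k
    induction k with
    | zero => simp
    | succ n ih =>
      have hqk : (0:ℝ) ≤ q ^ n := pow_nonneg hq0 n
      have hmul : q ^ n * x n ≤ q ^ n * ((C + A ^ n) * M + q * x (n + 1)) :=
        mul_le_mul_of_nonneg_left (hrec n) hqk
      have hrn : q ^ n * A ^ n = r ^ n := by rw [hr, hq, ← mul_pow]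
      calc x 0 ≤ M * (C * ∑ j ∈ Finset.range n, q ^ j
            + ∑ j ∈ Finset.range n, r ^ j) + q ^ n * x n := ih
        _ ≤ M * (C * ∑ j ∈ Finset.range n, q ^ j
            + ∑ j ∈ Finset.range n, r ^ j)
            + q ^ n * ((C + A ^ n) * M + q * x (n + 1)) := by linarith
        _ = M * (C * (∑ j ∈ Finset.range n, q ^ j + q ^ n)
            + (∑ j ∈ Finset.range n, r ^ j + q ^ n * A ^ n))
            + q ^ (n + 1) * x (n + 1) := by ring
        _ = M * (C * ∑ j ∈ Finset.range (n + 1), q ^ j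
            + ∑ j ∈ Finset.range (n + 1), r ^ j) + q ^ (n + 1) * x (n + 1) := by
          rw [hrn, Finset.sum_range_succ, Finset.sum_range_succ]
  -- geometric sum bounds
  have geom : ∀ (t : ℝ), 0 ≤ t → t < 1 → ∀ k,
      ∑ j ∈ Finset.range k, t ^ j ≤ 1 / (1 - t) := by
    intro t ht0 ht1 k
    rw [le_div_iff₀ (by linarith)]
    have h := geom_sum_mul t k
    nlinarith [pow_nonneg ht0 k]
  -- for every k : x 0 ≤ RHS + q^k * B
  have bound : ∀ k, x 0 ≤ (C / (1 - q) + 1 / (1 - r)) * M + q ^ k * B := by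
    intro k
    have h1 := geom q hq0 hq1 k
    have h2 := geom r hr0 hr1 k
    have h3 : q ^ k * x k ≤ q ^ k * B :=
      mul_le_mul_of_nonneg_left (hxB k) (pow_nonneg hq0 k)
    have h4 : M * (C * ∑ j ∈ Finset.range k, q ^ j + ∑ j ∈ Finset.range k, r ^ j)
        ≤ M * (C * (1 / (1 - q)) + 1 / (1 - r)) := by
      apply mul_le_mul_of_nonneg_left _ hM
      have := mul_le_mul_of_nonneg_left h1 hC.le
      linarith
    have h5 : M * (C * (1 / (1 - q)) + 1 / (1 - r))
        = (C / (1 - q) + 1 / (1 - r)) * M := by ring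
    have := key k
    linarith
  -- take the limit k → ∞
  have hlim : Filter.Tendsto (fun k => (C / (1 - q) + 1 / (1 - r)) * M + q ^ k * B)
      Filter.atTop (nhds ((C / (1 - q) + 1 / (1 - r)) * M)) := by
    have hpow : Filter.Tendsto (fun k : ℕ => q ^ k) Filter.atTop (nhds 0) :=
      tendsto_pow_atTop_nhds_zero_of_lt_one hq0 hq1
    have := (hpow.mul_const B).const_add ((C / (1 - q) + 1 / (1 - r)) * M)
    simpa using this
  exact ge_of_tendsto' hlim bound
end
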